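/- arXiv:1312.6447 — 8 statements merged into one kernel-verified Lean document; each statement's English description precedes it below -/
import Mathlib

section
/- Let r ≥ 1 be an integer, let T, F, z* be real numbers, and let λ_0 ≤ λ_1 ≤ ⋯ ≤ λ_{r−1} be nonnegative real numbers such that r·(λ_0 + λ_1 + ⋯ + λ_{r−1}) ≤ T·F and z* ≤ T·F − r(r−1)/2 − (λ_0 + λ_1 + ⋯ + λ_{r−1}). Then z* ≤ 2·(T·F − Σ_{i=0}^{r−1} λ_i·(r−i)) − r(r−1)/2. -/
/-!
Since `r · Σ λ_i ≤ T F`, the bound reduces to `2 Σ λ_i (r - i) ≤ (r + 1) Σ λ_i`, that is to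
`Σ λ_i (r - 1 - 2 i) ≤ 0`. The weights `r - 1 - 2 i` decrease and sum to zero, so this is
Chebyshev's sum inequality for the increasing sequence `λ`.
-/

open Finset

theorem monotoneOn_range_of_le_succ {α : Type*} [Preorder α] {f : ℕ → α} {n : ℕ}
    (hf : ∀ i, i + 1 < n → f i ≤ f (i + 1)) : MonotoneOn f (range n) := by
  intro a _ b hb hab
  induction b, hab using Nat.le_induction with
  | base => rfl
  | succ b _ ih =>
    have hb : b + 1 < n := by simpa using hb
    exact (ih (mem_coe.2 (mem_range.2 (by omega)))).trans (hf b hb)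

section CenteredWeights

variable {α : Type*} [CommRing α] [LinearOrder α] [IsStrictOrderedRing α]

theorem sum_range_centered_weight (n : ℕ) :
    ∑ i ∈ range n, ((n : α) - 1 - 2 * i) = 0 := by
  have gauss : ∀ m : ℕ, ∑ i ∈ range m, 2 * (i : α) = m * (m - 1) := by
    intro m
    induction m with
    | zero => simp
    | succ m ih => rw [sum_range_succ, ih]; push_cast; ring
  simp only [sum_sub_distrib, gauss, sum_const, card_range, nsmul_eq_mul, mul_one]
  ring

theorem MonotoneOn.sum_range_mul_centered_weight_nonpos {f : ℕ → α} {n : ℕ}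
    (hf : MonotoneOn f (range n)) :
    ∑ i ∈ range n, f i * ((n : α) - 1 - 2 * i) ≤ 0 := by
  have hw : Antitone fun i : ℕ ↦ (n : α) - 1 - 2 * i := fun i j hij ↦ by
    have : (i : α) ≤ j := by exact_mod_cast hij
    linarith
  have chebyshev := (hf.antivaryOn (hw.antitoneOn _)).card_mul_sum_le_sum_mul_sum
  rw [sum_range_centered_weight, mul_zero, card_range] at chebyshev
  rcases Nat.eq_zero_or_pos n with rfl | hn
  · simp
  · exact nonpos_of_mul_nonpos_right chebyshev (by exact_mod_cast hn)

theorem MonotoneOn.two_mul_sum_range_mul_sub_le {f : ℕ → α} {n : ℕ}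
    (hf : MonotoneOn f (range n)) :
    2 * ∑ i ∈ range n, f i * ((n : α) - i) ≤ ((n : α) + 1) * ∑ i ∈ range n, f i := by
  have hsplit : ∑ i ∈ range n, f i * ((n : α) - 1 - 2 * i)
      = 2 * ∑ i ∈ range n, f i * ((n : α) - i) - ((n : α) + 1) * ∑ i ∈ range n, f i := by
    rw [mul_sum, mul_sum, ← sum_sub_distrib]
    exact sum_congr rfl fun i _ ↦ by ring
  linarith [hf.sum_range_mul_centered_weight_nonpos]

end CenteredWeights

theorem quickest_to_ultimate_two_approx_general
    (r : ℕ) (T F zstar : ℝ) (lam : ℕ → ℝ)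
    (hmono : ∀ i, i + 1 < r → lam i ≤ lam (i + 1))
    (hsum : (r : ℝ) * (∑ i ∈ Finset.range r, lam i) ≤ T * F)
    (hopt : zstar ≤ T * F - (r : ℝ) * ((r : ℝ) - 1) / 2 - ∑ i ∈ Finset.range r, lam i) :
    zstar ≤ 2 * (T * F - ∑ i ∈ Finset.range r, lam i * ((r : ℝ) - (i : ℝ)))
      - (r : ℝ) * ((r : ℝ) - 1) / 2 := by
  have hweighted := (monotoneOn_range_of_le_succ hmono).two_mul_sum_range_mul_sub_le
  linarith

/-- arithmetic content of the 2-approximation theorem for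
`Quickest-to-ultimate` on unit-capacity instances. -/
theorem quickest_to_ultimate_two_approx
    (r : ℕ) (hr : 1 ≤ r) (T F zstar : ℝ) (lam : ℕ → ℝ)
    (hmono : ∀ i, i + 1 < r → lam i ≤ lam (i + 1))
    (hnonneg : ∀ i, i < r → 0 ≤ lam i)
    (hsum : (r : ℝ) * (∑ i ∈ Finset.range r, lam i) ≤ T * F)
    (hopt : zstar ≤ T * F - (r : ℝ) * ((r : ℝ) - 1) / 2 - ∑ i ∈ Finset.range r, lam i) :
    zstar ≤ 2 * (T * F - ∑ i ∈ Finset.range r, lam i * ((r : ℝ) - (i : ℝ)))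
      - (r : ℝ) * ((r : ℝ) - 1) / 2 :=
  quickest_to_ultimate_two_approx_general r T F zstar lam hmono hsum hopt
end

section
/- Let r ≥ 2 be an integer, let T and F be real numbers with F ≥ r, and let (μ, c, T) be a triple lying in X(r). Then T·F − Σ_{j=1}^{r} c_j ≤ (3/2)·(T·F − Σ_{i=0}^{r−1} (r−i)·μ_i). -/
/-- `(μ, c, T)` lies in the polyhedron `X(r)` from the paper. -/
def memX (r : ℕ) (μ c : ℕ → ℝ) (T : ℝ) : Prop :=
  (∀ i, i + 1 < r → μ i ≤ μ (i + 1)) ∧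
  (∀ i j, i < j → j ≤ r → ((j : ℝ) - (i : ℝ)) * μ i ≤ c j) ∧
  (∑ i ∈ Finset.range r, μ i) ≤ T ∧
  c 0 = 0 ∧
  (∀ i, i < r → 0 ≤ μ i) ∧
  (∀ j, 1 ≤ j → j ≤ r → 0 ≤ c j)

/-!
Since `T ≥ ∑ μᵢ` and `F ≥ r`, it suffices to show
`(3/2) ∑ (r - i) μᵢ ≤ ∑ⱼ cⱼ + (r/2) ∑ μᵢ`. Each `cⱼ` is bounded below by the average of
`(j - i) μᵢ` over the two middle indices `i = ⌊j/2⌋, ⌊(j-1)/2⌋`; with these bounds the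
inequality holds for every monotone `μ` (with equality for constant `μ`), by induction on `r`.
Going from `r` to `r + 1` amounts to `μ₀ + ⋯ + μᵣ ≤ midBound μ (r + 1) + (r/2) μᵣ`, which
follows by bounding the lower half of the terms by the middle value and the upper half by `μᵣ`.
-/

open Finset

/-- The average of the lower bounds `(j - i) μᵢ ≤ cⱼ` at `i = ⌊j/2⌋` and `i = ⌊(j-1)/2⌋`. -/
noncomputable def midBound (μ : ℕ → ℝ) (j : ℕ) : ℝ :=
  (((j : ℝ) - ((j / 2 : ℕ) : ℝ)) * μ (j / 2)
    + ((j : ℝ) - (((j - 1) / 2 : ℕ) : ℝ)) * μ ((j - 1) / 2)) / 2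

theorem memX.monotoneOn {r : ℕ} {μ c : ℕ → ℝ} {T : ℝ} (hX : memX r μ c T) :
    MonotoneOn μ (Set.Iio r) :=
  monotoneOn_of_le_succ Set.ordConnected_Iio fun i _ _ hi => by
    simpa using hX.1 i (by simpa using hi)

theorem memX.midBound_le {r : ℕ} {μ c : ℕ → ℝ} {T : ℝ} (hX : memX r μ c T) {j : ℕ}
    (hj1 : 1 ≤ j) (hjr : j ≤ r) : midBound μ j ≤ c j := by
  have h₁ := hX.2.1 (j / 2) j (by omega) hjr
  have h₂ := hX.2.1 ((j - 1) / 2) j (by omega) hjr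
  rw [midBound]
  linarith

theorem sum_range_shift_le_mul {μ : ℕ → ℝ} {a n b : ℕ} (hμ : MonotoneOn μ (Set.Iic b))
    (h : a + n ≤ b + 1) : ∑ i ∈ range n, μ (a + i) ≤ n * μ b := by
  have hle : ∀ i ∈ range n, μ (a + i) ≤ μ b := fun i hi => by
    have := mem_range.mp hi
    exact hμ (Set.mem_Iic.mpr (by omega)) (Set.mem_Iic.mpr le_rfl) (by omega)
  simpa using sum_le_card_nsmul _ _ _ hle

theorem sum_range_succ_le_midBound {μ : ℕ → ℝ} {r : ℕ} (hμ : MonotoneOn μ (Set.Iic r)) :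
    ∑ i ∈ range (r + 1), μ i ≤ midBound μ (r + 1) + r / 2 * μ r := by
  obtain ⟨m, rfl | rfl⟩ := Nat.even_or_odd' r
  · have hlow := sum_range_shift_le_mul (a := 0) (n := m + 1) (b := m)
      (hμ.mono (Set.Iic_subset_Iic.mpr (by omega))) (by omega)
    have hhigh := sum_range_shift_le_mul (a := m + 1) (n := m) hμ (by omega)
    rw [show 2 * m + 1 = (m + 1) + m by omega, sum_range_add]
    simp only [midBound, show (m + 1 + m) / 2 = m by omega,
      show (m + 1 + m - 1) / 2 = m by omega, zero_add] at hlow ⊢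
    push_cast at hlow hhigh ⊢
    linarith
  · have hlow := sum_range_shift_le_mul (a := 0) (n := m + 1) (b := m)
      (hμ.mono (Set.Iic_subset_Iic.mpr (by omega))) (by omega)
    have hhigh := sum_range_shift_le_mul (a := m + 2) (n := m) hμ (by omega)
    have hle {i j : ℕ} (hj : j ≤ 2 * m + 1) (hij : i ≤ j) : μ i ≤ μ j :=
      hμ (Set.mem_Iic.mpr (hij.trans hj)) (Set.mem_Iic.mpr hj) hij
    have hmid : (m : ℝ) * μ m ≤ m * μ (m + 1) :=
      mul_le_mul_of_nonneg_left (hle (by omega) (by omega)) m.cast_nonneg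
    have htop : μ (m + 1) ≤ μ (2 * m + 1) := hle le_rfl (by omega)
    rw [show 2 * m + 1 + 1 = (m + 2) + m by omega, sum_range_add, sum_range_succ]
    simp only [midBound, show (m + 2 + m) / 2 = m + 1 by omega,
      show (m + 2 + m - 1) / 2 = m by omega, zero_add] at hlow ⊢
    push_cast at hlow hhigh ⊢
    linarith

theorem sum_range_sub_mul_succ (μ : ℕ → ℝ) (r : ℕ) :
    ∑ i ∈ range (r + 1), (((r + 1 : ℕ) : ℝ) - i) * μ i =
      ∑ i ∈ range r, ((r : ℝ) - i) * μ i + ∑ i ∈ range (r + 1), μ i := by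
  have hsplit : ∑ i ∈ range r, (((r + 1 : ℕ) : ℝ) - i) * μ i =
      ∑ i ∈ range r, ((r : ℝ) - i) * μ i + ∑ i ∈ range r, μ i := by
    rw [← sum_add_distrib]
    exact sum_congr rfl fun i _ => by push_cast; ring
  rw [sum_range_succ, sum_range_succ μ, hsplit]
  push_cast
  ring

theorem three_halves_sum_le_midBound {μ : ℕ → ℝ} {r : ℕ} (hμ : MonotoneOn μ (Set.Iio r)) :
    3 / 2 * ∑ i ∈ range r, ((r : ℝ) - i) * μ i ≤
      ∑ j ∈ Icc 1 r, midBound μ j + r / 2 * ∑ i ∈ range r, μ i := by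
  induction r with
  | zero => simp
  | succ r ih =>
    have hprev := ih (hμ.mono (Set.Iio_subset_Iio (by omega)))
    have hstep := sum_range_succ_le_midBound (μ := μ) (r := r)
      (hμ.mono fun i hi => by rw [Set.mem_Iic] at hi; rw [Set.mem_Iio]; omega)
    rw [sum_range_sub_mul_succ, sum_Icc_succ_top (by omega), sum_range_succ μ r]
    rw [sum_range_succ] at hstep
    push_cast
    linarith

theorem quickest_increment_three_halves_approx_general
    (r : ℕ) (T F : ℝ) (hF : (r : ℝ) ≤ F)
    (μ c : ℕ → ℝ) (hX : memX r μ c T) :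
    T * F - (∑ j ∈ Finset.Icc 1 r, c j) ≤
      (3 / 2) * (T * F - ∑ i ∈ Finset.range r, ((r : ℝ) - (i : ℝ)) * μ i) := by
  have hkey := three_halves_sum_le_midBound hX.monotoneOn
  have hmid : ∑ j ∈ Icc 1 r, midBound μ j ≤ ∑ j ∈ Icc 1 r, c j :=
    sum_le_sum fun j hj => hX.midBound_le (mem_Icc.mp hj).1 (mem_Icc.mp hj).2
  have hsum : 0 ≤ ∑ i ∈ range r, μ i :=
    sum_nonneg fun i hi => hX.2.2.2.2.1 i (mem_range.mp hi)
  have hTF : (r : ℝ) * ∑ i ∈ range r, μ i ≤ F * T :=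
    mul_le_mul hF hX.2.2.1 hsum ((Nat.cast_nonneg r).trans hF)
  linarith

/-- combinatorial core of the theorem that `Quickest-increment`
is a 3/2-approximation algorithm for unit-capacity instances. -/
theorem quickest_increment_three_halves_approx
    (r : ℕ) (hr : 2 ≤ r) (T F : ℝ) (hF : (r : ℝ) ≤ F)
    (μ c : ℕ → ℝ) (hX : memX r μ c T) :
    T * F - (∑ j ∈ Finset.Icc 1 r, c j) ≤
      (3 / 2) * (T * F - ∑ i ∈ Finset.range r, ((r : ℝ) - (i : ℝ)) * μ i) :=
  quickest_increment_three_halves_approx_general r T F hF μ c hX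
end

section
/- Let r ≥ 1 be an integer and let γ ≥ 1 be a real number such that Y(r,γ) is nonempty. Then for all real numbers T, F with F ≥ r and every triple (μ, c, T) lying in X(r), one has T·F − Σ_{j=1}^{r} c_j ≤ γ·(T·F − Σ_{i=0}^{r−1} (r−i)·μ_i). -/
/-- `(x, y, z)` lies in the polyhedron `Y(r, γ)` from the paper.
Here `x` is indexed by integers so that `x (-1)` makes sense. -/
def memY (r : ℕ) (γ : ℝ) (x : ℤ → ℝ) (y : ℕ → ℕ → ℝ) (z : ℝ) : Prop :=
  (∀ j, 1 ≤ j → j ≤ r → (∑ i ∈ Finset.range j, y i j) ≤ 1) ∧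
  (∀ i : ℕ, i < r →
    z + (∑ j ∈ Finset.Icc (i + 1) r, ((j : ℝ) - (i : ℝ)) * y i j)
      + x (i : ℤ) - x ((i : ℤ) - 1) ≥ γ * ((r : ℝ) - (i : ℝ))) ∧
  z ≤ (r : ℝ) * (γ - 1) ∧
  x (-1) = 0 ∧
  x ((r : ℤ) - 1) = 0 ∧
  0 ≤ z ∧
  (∀ i : ℕ, (i : ℤ) ≤ (r : ℤ) - 2 → 0 ≤ x (i : ℤ)) ∧
  (∀ i j : ℕ, i < j → j ≤ r → 0 ≤ y i j)

/-!
This is weak LP duality. Multiply the `i`-th covering constraint of `Y(r, γ)` by `μ i ≥ 0` and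
sum over `i`. The `y`-terms are at most `∑ c j`, since `(j - i) μ i ≤ c j` and each column of `y`
sums to at most `1`. The `x`-terms are the increments of a nonnegative sequence vanishing at both
ends, so by Abel summation against the nondecreasing `μ` they contribute at most `0`. The
`z`-term is at most `r (γ - 1) T ≤ (γ - 1) T F`.
-/

open Finset

theorem Finset.sum_mul_sub_nonpos_of_monotone {n : ℕ} {μ a : ℕ → ℝ}
    (hμ : ∀ i, i + 1 < n → μ i ≤ μ (i + 1)) (ha : ∀ i, i < n → 0 ≤ a i)
    (ha₀ : a 0 = 0) (haₙ : a n = 0) :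
    ∑ i ∈ range n, μ i * (a (i + 1) - a i) ≤ 0 := by
  have hpartial (k : ℕ) : ∑ i ∈ range k, (a (i + 1) - a i) = a k := by
    rw [sum_range_sub, ha₀, sub_zero]
  -- By parts, the sum is `μ (n - 1) * a n - ∑ (μ (i + 1) - μ i) * a (i + 1)`.
  have := sum_range_by_parts μ (fun i => a (i + 1) - a i) n
  simp only [smul_eq_mul, hpartial, haₙ, mul_zero, zero_sub] at this
  rw [this, neg_nonpos]
  exact sum_nonneg fun i hi =>
    have hi := mem_range.mp hi
    mul_nonneg (sub_nonneg.mpr (hμ i (by omega))) (ha (i + 1) (by omega))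

theorem sum_sum_sub_mul_le_sum {r : ℕ} {μ c : ℕ → ℝ} {y : ℕ → ℕ → ℝ}
    (hμc : ∀ i j, i < j → j ≤ r → ((j : ℝ) - i) * μ i ≤ c j)
    (hc : ∀ j, 1 ≤ j → j ≤ r → 0 ≤ c j)
    (hy : ∀ j, 1 ≤ j → j ≤ r → ∑ i ∈ range j, y i j ≤ 1)
    (hy₀ : ∀ i j : ℕ, i < j → j ≤ r → 0 ≤ y i j) :
    ∑ i ∈ range r, ∑ j ∈ Icc (i + 1) r, μ i * (((j : ℝ) - i) * y i j) ≤
      ∑ j ∈ Icc 1 r, c j := by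
  calc ∑ i ∈ range r, ∑ j ∈ Icc (i + 1) r, μ i * (((j : ℝ) - i) * y i j)
      ≤ ∑ i ∈ range r, ∑ j ∈ Icc (i + 1) r, c j * y i j := by
        refine sum_le_sum fun i _ => sum_le_sum fun j hj => ?_
        obtain ⟨hij, hjr⟩ := mem_Icc.mp hj
        calc μ i * (((j : ℝ) - i) * y i j) = ((j : ℝ) - i) * μ i * y i j := by ring
          _ ≤ c j * y i j := mul_le_mul_of_nonneg_right (hμc i j hij hjr) (hy₀ i j hij hjr)
    _ = ∑ j ∈ Icc 1 r, c j * ∑ i ∈ range j, y i j := by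
        simp only [mul_sum]
        refine sum_comm' fun i j => ?_
        simp only [mem_range, mem_Icc]
        omega
    _ ≤ ∑ j ∈ Icc 1 r, c j := by
        refine sum_le_sum fun j hj => ?_
        obtain ⟨h1j, hjr⟩ := mem_Icc.mp hj
        exact mul_le_of_le_one_right (hc j h1j hjr) (hy j h1j hjr)

theorem memY.mul_sum_le_of_memX {r : ℕ} {γ z T : ℝ} {x : ℤ → ℝ} {y : ℕ → ℕ → ℝ} {μ c : ℕ → ℝ}
    (hY : memY r γ x y z) (hX : memX r μ c T) :
    γ * ∑ i ∈ range r, ((r : ℝ) - i) * μ i ≤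
      z * ∑ i ∈ range r, μ i + ∑ j ∈ Icc 1 r, c j := by
  obtain ⟨hy, hdual, -, hx₀, hxᵣ, -, hx, hy₀⟩ := hY
  obtain ⟨hmono, hμc, -, -, hμ, hc⟩ := hX
  have habel : ∑ i ∈ range r, μ i * (x i - x (i - 1)) ≤ 0 := by
    have hx_shift : ∀ k : ℕ, k < r → 0 ≤ x ((k : ℤ) - 1) := by
      rintro (_ | k) hk
      · simpa using hx₀.ge
      · simpa using hx k (by omega)
    simpa using sum_mul_sub_nonpos_of_monotone (a := fun k : ℕ => x (k - 1)) hmono hx_shift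
      (by simpa using hx₀) hxᵣ
  calc γ * ∑ i ∈ range r, ((r : ℝ) - i) * μ i
      = ∑ i ∈ range r, μ i * (γ * ((r : ℝ) - i)) := by
        rw [mul_sum]; exact sum_congr rfl fun i _ => by ring
    _ ≤ ∑ i ∈ range r, μ i *
          (z + ∑ j ∈ Icc (i + 1) r, ((j : ℝ) - i) * y i j + x i - x (i - 1)) :=
        sum_le_sum fun i hi =>
          mul_le_mul_of_nonneg_left (hdual i (mem_range.mp hi)) (hμ i (mem_range.mp hi))
    _ = z * ∑ i ∈ range r, μ i
          + ∑ i ∈ range r, ∑ j ∈ Icc (i + 1) r, μ i * (((j : ℝ) - i) * y i j)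
          + ∑ i ∈ range r, μ i * (x i - x (i - 1)) := by
        rw [mul_sum, ← sum_add_distrib, ← sum_add_distrib]
        exact sum_congr rfl fun i _ => by rw [← mul_sum]; ring
    _ ≤ z * ∑ i ∈ range r, μ i + ∑ j ∈ Icc 1 r, c j + 0 := by
        gcongr
        exact sum_sum_sub_mul_le_sum hμc hc hy hy₀
    _ = z * ∑ i ∈ range r, μ i + ∑ j ∈ Icc 1 r, c j := add_zero _

theorem quickest_increment_gamma_approx_of_Y_nonempty_general
    (r : ℕ) (γ : ℝ) (hγ : 1 ≤ γ)
    (hY : ∃ (x : ℤ → ℝ) (y : ℕ → ℕ → ℝ) (z : ℝ), memY r γ x y z) :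
    ∀ (T F : ℝ) (μ c : ℕ → ℝ), (r : ℝ) ≤ F → memX r μ c T →
      T * F - (∑ j ∈ Finset.Icc 1 r, c j) ≤
        γ * (T * F - ∑ i ∈ Finset.range r, ((r : ℝ) - (i : ℝ)) * μ i) := by
  obtain ⟨x, y, z, hY⟩ := hY
  intro T F μ c hF hX
  have hduality := hY.mul_sum_le_of_memX hX
  obtain ⟨-, -, hzγ, -, -, hz, -, -⟩ := hY
  obtain ⟨-, -, hμT, -, hμ, -⟩ := hX
  have hμsum : 0 ≤ ∑ i ∈ range r, μ i := sum_nonneg fun i hi => hμ i (mem_range.mp hi)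
  have hzT : z * ∑ i ∈ range r, μ i ≤ (γ - 1) * (T * F) :=
    calc z * ∑ i ∈ range r, μ i ≤ (r * (γ - 1)) * T :=
          mul_le_mul hzγ hμT hμsum (hz.trans hzγ)
      _ ≤ (γ - 1) * (T * F) := by
          nlinarith [mul_nonneg (sub_nonneg.mpr hγ) (hμsum.trans hμT)]
  linarith

/-- sufficient condition for `Quickest-increment` to be a
`γ`-approximation algorithm on all instances with `F - f = r`. -/
theorem quickest_increment_gamma_approx_of_Y_nonempty
    (r : ℕ) (hr : 1 ≤ r) (γ : ℝ) (hγ : 1 ≤ γ)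
    (hY : ∃ (x : ℤ → ℝ) (y : ℕ → ℕ → ℝ) (z : ℝ), memY r γ x y z) :
    ∀ (T F : ℝ) (μ c : ℕ → ℝ), (r : ℝ) ≤ F → memX r μ c T →
      T * F - (∑ j ∈ Finset.Icc 1 r, c j) ≤
        γ * (T * F - ∑ i ∈ Finset.range r, ((r : ℝ) - (i : ℝ)) * μ i) :=
  quickest_increment_gamma_approx_of_Y_nonempty_general r γ hγ hY
end

section
/- Let r ≥ 1 be an integer and γ a real number, and suppose there exists a triple (x, y, z) lying in Y(r,γ). Then every triple (μ, c, T) lying in X(r) satisfies r·(1−γ)·T − Σ_{j=1}^{r} c_j + γ·Σ_{i=0}^{r−1} (r−i)·μ_i ≤ 0. -/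
/-! Weak duality: multiply the `i`-th covering constraint of `Y(r, γ)` by `μ i ≥ 0` and sum over
`i`. The `z`-part is at most `r (γ - 1) T` since `∑ μ i ≤ T`; exchanging the order of summation,
the `y`-part is at most `∑ c j` since `(j - i) μ i ≤ c j` and the columns of `y` sum to at most
`1`; and the telescoping `x`-part is nonpositive by summation by parts, as `μ` is monotone and
`x` vanishes at both ends. -/

open Finset

theorem sum_range_sub_pred_mul_by_parts (x : ℤ → ℝ) (μ : ℕ → ℝ) (n : ℕ) :
    ∑ i ∈ range n, (x i - x (i - 1)) * μ i
      = x ((n : ℤ) - 1) * μ n - x (-1) * μ 0 - ∑ i ∈ range n, x i * (μ (i + 1) - μ i) := by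
  induction n with
  | zero => simp
  | succ n ih =>
    rw [sum_range_succ, sum_range_succ, ih]
    push_cast
    ring_nf

theorem sum_range_sub_pred_mul_nonpos {r : ℕ} {x : ℤ → ℝ} {μ : ℕ → ℝ}
    (hx_first : x (-1) = 0) (hx_last : x ((r : ℤ) - 1) = 0)
    (hx_nonneg : ∀ i : ℕ, i + 1 < r → 0 ≤ x i) (hμ_mono : ∀ i, i + 1 < r → μ i ≤ μ (i + 1)) :
    ∑ i ∈ range r, (x i - x (i - 1)) * μ i ≤ 0 := by
  rw [sum_range_sub_pred_mul_by_parts, hx_first, hx_last, zero_mul, zero_mul, sub_zero,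
    zero_sub, neg_nonpos]
  refine sum_nonneg fun i hi => ?_
  rcases (Nat.lt_or_eq_of_le (mem_range.mp hi)).symm with hlast | hinner
  · have : ((i : ℕ) : ℤ) = r - 1 := by omega
    rw [this, hx_last, zero_mul]
  · exact mul_nonneg (hx_nonneg i hinner) (sub_nonneg.mpr (hμ_mono i hinner))

theorem sum_sum_mul_le_sum_of_sum_le_one {r : ℕ} {y : ℕ → ℕ → ℝ} {μ c : ℕ → ℝ}
    (hy_col : ∀ j, 1 ≤ j → j ≤ r → ∑ i ∈ range j, y i j ≤ 1)
    (hy_nonneg : ∀ i j : ℕ, i < j → j ≤ r → 0 ≤ y i j)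
    (hμc : ∀ i j, i < j → j ≤ r → ((j : ℝ) - i) * μ i ≤ c j)
    (hc_nonneg : ∀ j, 1 ≤ j → j ≤ r → 0 ≤ c j) :
    ∑ i ∈ range r, ∑ j ∈ Icc (i + 1) r, ((j : ℝ) - i) * y i j * μ i ≤ ∑ j ∈ Icc 1 r, c j := by
  calc ∑ i ∈ range r, ∑ j ∈ Icc (i + 1) r, ((j : ℝ) - i) * y i j * μ i
      ≤ ∑ i ∈ range r, ∑ j ∈ Icc (i + 1) r, y i j * c j := by
        refine sum_le_sum fun i _ => sum_le_sum fun j hj => ?_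
        obtain ⟨hij, hjr⟩ := mem_Icc.mp hj
        calc ((j : ℝ) - i) * y i j * μ i = y i j * (((j : ℝ) - i) * μ i) := by ring
          _ ≤ y i j * c j := mul_le_mul_of_nonneg_left (hμc i j hij hjr) (hy_nonneg i j hij hjr)
    _ = ∑ j ∈ Icc 1 r, (∑ i ∈ range j, y i j) * c j := by
        simp_rw [sum_mul]
        exact sum_comm' fun i j => by simp only [mem_range, mem_Icc]; omega
    _ ≤ ∑ j ∈ Icc 1 r, c j := by
        refine sum_le_sum fun j hj => ?_
        obtain ⟨hj1, hjr⟩ := mem_Icc.mp hj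
        simpa using mul_le_mul_of_nonneg_right (hy_col j hj1 hjr) (hc_nonneg j hj1 hjr)

theorem weak_duality_X_Y_general
    (r : ℕ) (γ : ℝ)
    (hY : ∃ (x : ℤ → ℝ) (y : ℕ → ℕ → ℝ) (z : ℝ), memY r γ x y z) :
    ∀ (μ c : ℕ → ℝ) (T : ℝ), memX r μ c T →
      (r : ℝ) * (1 - γ) * T - (∑ j ∈ Finset.Icc 1 r, c j)
        + γ * (∑ i ∈ Finset.range r, ((r : ℝ) - (i : ℝ)) * μ i) ≤ 0 := by
  obtain ⟨x, y, z, hy_col, hdual, hz_le, hx_first, hx_last, hz_nonneg, hx_nonneg, hy_nonneg⟩ := hY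
  rintro μ c T ⟨hμ_mono, hμc, hμT, -, hμ_nonneg, hc_nonneg⟩
  have hT : 0 ≤ T := (sum_nonneg fun i hi => hμ_nonneg i (mem_range.mp hi)).trans hμT
  have hcombined : γ * ∑ i ∈ range r, ((r : ℝ) - i) * μ i
      ≤ z * ∑ i ∈ range r, μ i
        + ∑ i ∈ range r, ∑ j ∈ Icc (i + 1) r, ((j : ℝ) - i) * y i j * μ i
        + ∑ i ∈ range r, (x i - x (i - 1)) * μ i := by
    calc γ * ∑ i ∈ range r, ((r : ℝ) - i) * μ i = ∑ i ∈ range r, γ * (r - i) * μ i := by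
          simp only [mul_sum, mul_assoc]
      _ ≤ ∑ i ∈ range r, (z + ∑ j ∈ Icc (i + 1) r, ((j : ℝ) - i) * y i j + x i - x (i - 1)) * μ i :=
          sum_le_sum fun i hi => mul_le_mul_of_nonneg_right
            (hdual i (mem_range.mp hi)) (hμ_nonneg i (mem_range.mp hi))
      _ = _ := by simp only [sub_eq_add_neg, add_mul, sum_add_distrib, sum_mul, mul_sum]; ring
  have hz : z * ∑ i ∈ range r, μ i ≤ r * (γ - 1) * T :=
    (mul_le_mul_of_nonneg_left hμT hz_nonneg).trans (mul_le_mul_of_nonneg_right hz_le hT)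
  have hy := sum_sum_mul_le_sum_of_sum_le_one hy_col hy_nonneg hμc hc_nonneg
  have hx := sum_range_sub_pred_mul_nonpos hx_first hx_last (fun i hi => hx_nonneg i (by omega))
    hμ_mono
  linarith

/-- the weak-duality step — a point in `Y(r, γ)` certifies the
validity of the inequality `r(1-γ)T - Σ c_j + γ Σ (r-i) μ_i ≤ 0` over `X(r)`. -/
theorem weak_duality_X_Y
    (r : ℕ) (hr : 1 ≤ r) (γ : ℝ)
    (hY : ∃ (x : ℤ → ℝ) (y : ℕ → ℕ → ℝ) (z : ℝ), memY r γ x y z) :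
    ∀ (μ c : ℕ → ℝ) (T : ℝ), memX r μ c T →
      (r : ℝ) * (1 - γ) * T - (∑ j ∈ Finset.Icc 1 r, c j)
        + γ * (∑ i ∈ Finset.range r, ((r : ℝ) - (i : ℝ)) * μ i) ≤ 0 :=
  weak_duality_X_Y_general r γ hY
end

section
/- Let r ≥ 2 be an integer and set s = ⌊(r+2)/3⌋. Then there exist nonnegative real numbers y_{ij}, for 0 ≤ i ≤ s and i+1 ≤ j ≤ r, such that Σ_{j=i+1}^{r} (j−i)·y_{ij} ≥ r − (3/2)·i for every 0 ≤ i ≤ s, and Σ_{i=0}^{min(j−1, s)} y_{ij} ≤ 1 for every 1 ≤ j ≤ r. -/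
/-!
Try the uniform point `y i j = 1 / (s + 1)`. Each column sums to at most `(s + 1) / (s + 1) = 1`,
and with `n = r - i` the row condition reads `n (n + 1) ≥ (s + 1) (3 n - r)`, a quadratic
inequality in `n` that holds for every `n` once its discriminant `(3 s + 2)² - 4 (s + 1) r` is
nonpositive. This happens for `r = 6` and all `r ≥ 8`; the remaining cases `r ∈ {2, 3, 4, 5, 7}`
are settled by explicit rational points, checked by computation.
-/

open Finset

def IsInitialSegmentFeasible (K : Type*) [Field K] [LinearOrder K] (r : ℕ) (y : ℕ → ℕ → K) :
    Prop :=
  (∀ i, i ≤ (r + 2) / 3 → ∀ j, i + 1 ≤ j → j ≤ r → 0 ≤ y i j) ∧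
  (∀ i, i ≤ (r + 2) / 3 →
    (∑ j ∈ Icc (i + 1) r, ((j : K) - (i : K)) * y i j) ≥ (r : K) - (3 / 2) * (i : K)) ∧
  (∀ j, 1 ≤ j → j ≤ r → (∑ i ∈ Icc 0 (min (j - 1) ((r + 2) / 3)), y i j) ≤ 1)

section Field

variable {K : Type*} [Field K] [LinearOrder K] [IsStrictOrderedRing K]

theorem IsInitialSegmentFeasible.ratCast {r : ℕ} {y : ℕ → ℕ → ℚ}
    (h : IsInitialSegmentFeasible ℚ r y) :
    IsInitialSegmentFeasible K r (fun i j => (y i j : K)) := by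
  obtain ⟨hnonneg, hrow, hcol⟩ := h
  refine ⟨fun i hi j hij hj => Rat.cast_nonneg.mpr (hnonneg i hi j hij hj),
    fun i hi => ?_, fun j hj hjr => ?_⟩
  · simpa using (Rat.cast_le (K := K)).mpr (hrow i hi)
  · beta_reduce
    exact_mod_cast hcol j hj hjr

theorem sum_Icc_sub_eq_mul_succ_div_two (i n : ℕ) :
    ∑ j ∈ Icc (i + 1) (i + n), ((j : K) - i) = n * (n + 1) / 2 := by
  induction n with
  | zero => simp
  | succ n ih =>
    rw [← add_assoc, sum_Icc_succ_top (by omega), ih]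
    push_cast
    ring

theorem sub_three_halves_mul_le_of_sq_le {r s n i : K} (hdisc : (3 * s + 2) ^ 2 ≤ 4 * (s + 1) * r)
    (hr : i + n = r) (hs : 0 < s + 1) :
    r - 3 / 2 * i ≤ n * (n + 1) / 2 * (1 / (s + 1)) := by
  rw [← mul_div_assoc, mul_one, le_div_iff₀ hs]
  nlinarith [sq_nonneg (2 * n - 3 * s - 2)]

theorem isInitialSegmentFeasible_const {r : ℕ}
    (hdisc : (3 * ((r + 2) / 3) + 2) ^ 2 ≤ 4 * ((r + 2) / 3 + 1) * r) :
    IsInitialSegmentFeasible K r (fun _ _ => 1 / (((r + 2) / 3 : ℕ) + 1 : K)) := by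
  set s := (r + 2) / 3
  have hs : (0 : K) < s + 1 := by positivity
  refine ⟨fun _ _ _ _ _ => by positivity, fun i hi => ?_, fun j _ _ => ?_⟩
  · obtain ⟨n, rfl⟩ : ∃ n, r = i + n := ⟨r - i, by omega⟩
    rw [← sum_mul, sum_Icc_sub_eq_mul_succ_div_two, ge_iff_le]
    exact sub_three_halves_mul_le_of_sq_le (by exact_mod_cast hdisc) (by push_cast; ring) hs
  · rw [sum_const, Nat.card_Icc, nsmul_eq_mul, mul_one_div, div_le_one hs]
    exact_mod_cast (by omega : min (j - 1) s + 1 - 0 ≤ s + 1)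

end Field

theorem sq_le_of_eight_le {r : ℕ} (hr : 8 ≤ r) :
    (3 * ((r + 2) / 3) + 2) ^ 2 ≤ 4 * ((r + 2) / 3 + 1) * r := by
  set s := (r + 2) / 3
  have hrs : 3 * s ≤ r + 2 := Nat.mul_div_le (r + 2) 3
  obtain hs | hs : s = 3 ∨ 4 ≤ s := by omega
  · rw [hs]
    omega
  · nlinarith [Nat.mul_le_mul_left (4 * (s + 1)) hrs]

-- Nonnegativity is stated with `i` bounded before `j` is introduced, making this instance exist.
instance {r : ℕ} {y : ℕ → ℕ → ℚ} : Decidable (IsInitialSegmentFeasible ℚ r y) := by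
  unfold IsInitialSegmentFeasible
  infer_instance

def ofRows (rows : List (List ℚ)) (i j : ℕ) : ℚ := (rows.getD i []).getD j 0

theorem exists_isInitialSegmentFeasible_rat_of_lt_sq {r : ℕ} (hr : 2 ≤ r)
    (hdisc : 4 * ((r + 2) / 3 + 1) * r < (3 * ((r + 2) / 3) + 2) ^ 2) :
    ∃ y, IsInitialSegmentFeasible ℚ r y := by
  have hr8 : r < 8 := by
    by_contra! h
    exact (sq_le_of_eight_le h).not_gt hdisc
  interval_cases r
  · exact ⟨ofRows [[0, 1, 1/2], [0, 0, 1/2]], by decide +kernel⟩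
  · exact ⟨ofRows [[0, 1, 0, 3/4], [0, 0, 1, 1/4]], by decide +kernel⟩
  · exact ⟨ofRows [[0, 1/2, 1, 1/2], [0, 0, 0, 1/2, 1/2], [0, 0, 0, 0, 1/2]], by decide +kernel⟩
  · exact ⟨ofRows [[0, 0, 1/2, 11/12, 1/3], [0, 0, 0, 1/12, 2/3, 1/3], [0, 0, 0, 0, 0, 2/3]],
      by decide +kernel⟩
  · norm_num at hdisc
  · exact ⟨ofRows [[0, 0, 0, 1, 1], [0, 0, 0, 0, 0, 1, 1/3], [0, 0, 0, 0, 0, 0, 1/2, 1/2],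
      [0, 0, 0, 0, 0, 0, 1/6, 1/2]], by decide +kernel⟩

/-- auxiliary feasibility lemma (Lemma on the initial segment)
used to exhibit a point of `Y(r, 3/2)`. Here `s = ⌊(r+2)/3⌋` is natural-number
(floor) division. -/
theorem initial_segment_feasibility (r : ℕ) (hr : 2 ≤ r) :
    ∃ y : ℕ → ℕ → ℝ,
      (∀ i j, i ≤ (r + 2) / 3 → i + 1 ≤ j → j ≤ r → 0 ≤ y i j) ∧
      (∀ i, i ≤ (r + 2) / 3 →
        (∑ j ∈ Finset.Icc (i + 1) r, ((j : ℝ) - (i : ℝ)) * y i j) ≥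
          (r : ℝ) - (3 / 2) * (i : ℝ)) ∧
      (∀ j, 1 ≤ j → j ≤ r →
        (∑ i ∈ Finset.Icc 0 (min (j - 1) ((r + 2) / 3)), y i j) ≤ 1) := by
  obtain ⟨y, hnonneg, hrow, hcol⟩ : ∃ y, IsInitialSegmentFeasible ℝ r y := by
    rcases le_or_gt ((3 * ((r + 2) / 3) + 2) ^ 2) (4 * ((r + 2) / 3 + 1) * r) with hdisc | hdisc
    · exact ⟨_, isInitialSegmentFeasible_const hdisc⟩
    · obtain ⟨y, hy⟩ := exists_isInitialSegmentFeasible_rat_of_lt_sq hr hdisc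
      exact ⟨_, hy.ratCast⟩
  exact ⟨y, fun i j hi hij hj => hnonneg i hi j hij hj, hrow, hcol⟩
end

section
/- Let f and r be natural numbers with r ≤ f, set F = f + r, and let T, c, z*, z₁ be real numbers satisfying c ≥ r, T ≥ c, z* ≤ T·F − r(r−1)/2 − c, and z₁ ≥ T·F − c·(r+1)/2. Then z* ≤ (4/3)·z₁. -/
/-! Since `r ≤ f`, the ultimate matching size `F = f + r` is at least `2r`, so `T·F ≥ 2cr`.
Multiplying out, `z* ≤ (4/3)·z₁` reduces to `4cr ≤ 2TF + 2c + 3r(r - 1)`, and the two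
extra terms are nonnegative. -/

/-- arithmetic content of Case 1 (`r ≤ f`) of the proposition
that `Quickest-to-ultimate` is a 4/3-approximation for incremental maximum
matching. Here `F = f + r`. -/
theorem matching_four_thirds_case_one
    (f r : ℕ) (hrf : r ≤ f) (T c zstar z1 : ℝ)
    (hc : (r : ℝ) ≤ c) (hT : c ≤ T)
    (hzstar : zstar ≤ T * ((f : ℝ) + (r : ℝ)) - (r : ℝ) * ((r : ℝ) - 1) / 2 - c)
    (hz1 : z1 ≥ T * ((f : ℝ) + (r : ℝ)) - c * ((r : ℝ) + 1) / 2) :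
    zstar ≤ (4 / 3) * z1 := by
  have hc0 : 0 ≤ c := (Nat.cast_nonneg r).trans hc
  have hF : 2 * (r : ℝ) ≤ f + r := by
    rw [two_mul]
    gcongr
  have hTF : c * (2 * r) ≤ T * (f + r) := mul_le_mul hT hF (by positivity) (hc0.trans hT)
  have hpairs : 0 ≤ (r : ℝ) * (r - 1) / 2 := by
    rw [← Nat.cast_choose_two]
    positivity
  linarith
end

section
/- Let f and r be natural numbers with f < r, set F = f + r, and let T, c, z*, z₁ be real numbers satisfying c ≥ r, T ≥ c + 1, z* ≤ T·F − r(r−1)/2 − c, and z₁ ≥ T·F − (1/4)·(c·F + r·(r−f) + 2c). Then z* ≤ (4/3)·z₁. -/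
theorem optimum_bound_le_four_thirds_mul_quickest_bound {f r T c : ℝ}
    (hf : 0 ≤ f) (hr : 0 ≤ r) (hc : r ≤ c) (hT : c + 1 ≤ T) :
    T * (f + r) - r * (r - 1) / 2 - c
      ≤ 4 / 3 * (T * (f + r) - 1 / 4 * (c * (f + r) + r * (r - f) + 2 * c)) := by
  have slack_eq : 4 / 3 * (T * (f + r) - 1 / 4 * (c * (f + r) + r * (r - f) + 2 * c))
      - (T * (f + r) - r * (r - 1) / 2 - c)
      = ((T - c - 1) * (f + r) + f + r * f + r ^ 2 / 2 + r / 2 + (c - r)) / 3 := by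
    ring
  have horizon_term : 0 ≤ (T - c - 1) * (f + r) := mul_nonneg (by linarith) (by linarith)
  linarith [mul_nonneg hr hf, sq_nonneg r]

theorem matching_four_thirds_case_two_general
    (f r : ℕ) (T c zstar z1 : ℝ)
    (hc : (r : ℝ) ≤ c) (hT : c + 1 ≤ T)
    (hzstar : zstar ≤ T * ((f : ℝ) + (r : ℝ)) - (r : ℝ) * ((r : ℝ) - 1) / 2 - c)
    (hz1 : z1 ≥ T * ((f : ℝ) + (r : ℝ))
      - (1 / 4) * (c * ((f : ℝ) + (r : ℝ)) + (r : ℝ) * ((r : ℝ) - (f : ℝ)) + 2 * c)) :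
    zstar ≤ (4 / 3) * z1 :=
  calc zstar ≤ T * ((f : ℝ) + r) - r * ((r : ℝ) - 1) / 2 - c := hzstar
    _ ≤ 4 / 3 * (T * ((f : ℝ) + r) - 1 / 4 * (c * ((f : ℝ) + r) + r * ((r : ℝ) - f) + 2 * c)) :=
      optimum_bound_le_four_thirds_mul_quickest_bound f.cast_nonneg r.cast_nonneg hc hT
    _ ≤ 4 / 3 * z1 := by gcongr

/-- arithmetic content of Case 2 (`f < r`) of the proposition
that `Quickest-to-ultimate` is a 4/3-approximation for incremental maximum
matching. Here `F = f + r`. -/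
theorem matching_four_thirds_case_two
    (f r : ℕ) (hfr : f < r) (T c zstar z1 : ℝ)
    (hc : (r : ℝ) ≤ c) (hT : c + 1 ≤ T)
    (hzstar : zstar ≤ T * ((f : ℝ) + (r : ℝ)) - (r : ℝ) * ((r : ℝ) - 1) / 2 - c)
    (hz1 : z1 ≥ T * ((f : ℝ) + (r : ℝ))
      - (1 / 4) * (c * ((f : ℝ) + (r : ℝ)) + (r : ℝ) * ((r : ℝ) - (f : ℝ)) + 2 * c)) :
    zstar ≤ (4 / 3) * z1 :=
  matching_four_thirds_case_two_general f r T c zstar z1 hc hT hzstar hz1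
end

section
/- Let f and r be integers with 0 ≤ f < r, set ρ = ⌈(r−f)/2⌉, and let λ_0, …, λ_{r−1} be nonnegative real numbers such that λ_i = 1 for every 0 ≤ i ≤ ρ−1, λ_ρ ≤ λ_{ρ+1} ≤ ⋯ ≤ λ_{r−1}, and λ_0 + λ_1 + ⋯ + λ_{r−1} = c with c ≥ r. Then Σ_{i=0}^{r−1} λ_i·(r−i) ≤ (1/4)·(c·(f+r) + r·(r−f) + 2c). -/
/-!
Split the sum at `ρ`. On the first `ρ` indices `λ_i = 1`, so that part is an explicit arithmetic
sum. On the remaining `r - ρ` indices `λ` increases while the weight `r - i` decreases, so by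
Chebyshev's sum inequality that part is at most the average weight `(r - ρ + 1) / 2` times
`c - ρ`. This gives `2 Σ λ_i (r - i) ≤ ρ r + c (r - ρ + 1)`, and the claimed bound exceeds the
right-hand side by `(c - r)(2ρ - (r - f)) / 4 ≥ 0`.
-/

open Finset

lemma sum_range_natCast_sub_mul_two (r a : ℕ) :
    (∑ i ∈ range a, ((r : ℝ) - i)) * 2 = a * (2 * r - a + 1) := by
  induction a with
  | zero => simp
  | succ a ih =>
    rw [sum_range_succ, add_mul, ih]
    push_cast
    ring

lemma sum_Ico_natCast_sub_mul_two {a r : ℕ} (h : a ≤ r) :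
    (∑ i ∈ Ico a r, ((r : ℝ) - i)) * 2 = (r - a) * (r - a + 1) := by
  have hsplit := sum_range_add_sum_Ico (fun i : ℕ => (r : ℝ) - i) h
  have hr := sum_range_natCast_sub_mul_two r r
  have ha := sum_range_natCast_sub_mul_two r a
  linear_combination 2 * hsplit - ha + hr

lemma sum_Ico_mul_natCast_sub_mul_two_le {lam : ℕ → ℝ} {a r : ℕ} (h : a ≤ r)
    (hlam : MonotoneOn lam (Set.Ico a r)) :
    (∑ i ∈ Ico a r, lam i * (r - i)) * 2 ≤ (∑ i ∈ Ico a r, lam i) * (r - a + 1) := by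
  obtain rfl | hlt := h.eq_or_lt
  · simp
  have hanti : AntivaryOn lam (fun i : ℕ => (r : ℝ) - i) ↑(Ico a r) := by
    rw [coe_Ico]
    exact hlam.antivaryOn fun i _ j _ hij => by gcongr
  have hcheb := hanti.card_mul_sum_le_sum_mul_sum
  have hweights := sum_Ico_natCast_sub_mul_two h
  have hcard : ((Ico a r).card : ℝ) = r - a := by
    rw [Nat.card_Ico, Nat.cast_sub h]
  have hpos : (0 : ℝ) < r - a := sub_pos.mpr (by exact_mod_cast hlt)
  rw [hcard] at hcheb
  refine le_of_mul_le_mul_left ?_ hpos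
  linear_combination 2 * hcheb + (∑ i ∈ Ico a r, lam i) * hweights

lemma sum_range_mul_natCast_sub_mul_two_le {lam : ℕ → ℝ} {ρ r : ℕ} (hρ : ρ ≤ r)
    (hone : ∀ i < ρ, lam i = 1) (hlam : MonotoneOn lam (Set.Ico ρ r)) :
    (∑ i ∈ range r, lam i * (r - i)) * 2 ≤ ρ * r + (∑ i ∈ range r, lam i) * (r - ρ + 1) := by
  have hhead : ∀ g : ℕ → ℝ, ∑ i ∈ range ρ, lam i * g i = ∑ i ∈ range ρ, g i := fun g =>
    sum_congr rfl fun i hi => by rw [hone i (mem_range.mp hi), one_mul]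
  have hcount : ∑ i ∈ range ρ, lam i = ρ := by simpa using hhead 1
  have hweights := sum_range_natCast_sub_mul_two r ρ
  have htail := sum_Ico_mul_natCast_sub_mul_two_le hρ hlam
  rw [← sum_range_add_sum_Ico _ hρ, ← sum_range_add_sum_Ico _ hρ, hhead, hcount]
  nlinarith

theorem weighted_sum_bound_case_two_general
    (f r : ℕ) (c : ℝ) (lam : ℕ → ℝ)
    (hone : ∀ i, i < (r - f + 1) / 2 → lam i = 1)
    (hmono : ∀ i, (r - f + 1) / 2 ≤ i → i + 1 < r → lam i ≤ lam (i + 1))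
    (hsum : (∑ i ∈ Finset.range r, lam i) = c)
    (hc : (r : ℝ) ≤ c) :
    (∑ i ∈ Finset.range r, lam i * ((r : ℝ) - (i : ℝ)))
      ≤ (1 / 4) * (c * ((f : ℝ) + (r : ℝ)) + (r : ℝ) * ((r : ℝ) - (f : ℝ)) + 2 * c) := by
  set ρ := (r - f + 1) / 2
  have hρ : ρ ≤ r := by omega
  have hρ_ceil : (r : ℝ) ≤ f + 2 * ρ := by exact_mod_cast (by omega : r ≤ f + 2 * ρ)
  have hlam : MonotoneOn lam (Set.Ico ρ r) :=
    monotoneOn_of_le_add_one Set.ordConnected_Ico fun i _ hi hi' => hmono i hi.1 hi'.2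
  have hbound := sum_range_mul_natCast_sub_mul_two_le hρ hone hlam
  rw [hsum] at hbound
  nlinarith [mul_nonneg (sub_nonneg.mpr hc) (sub_nonneg.mpr hρ_ceil)]

/-- core of Case 2 (`f < r`) of the improved lower bound on the
value of `Quickest-to-ultimate` for incremental maximum matching.
Here `ρ = ⌈(r-f)/2⌉`, expressed as natural-number division `(r - f + 1) / 2`
(which equals the ceiling of `(r - f)/2` since `f < r`). -/
theorem weighted_sum_bound_case_two
    (f r : ℕ) (hfr : f < r) (c : ℝ) (lam : ℕ → ℝ)
    (hnonneg : ∀ i, i < r → 0 ≤ lam i)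
    (hone : ∀ i, i < (r - f + 1) / 2 → lam i = 1)
    (hmono : ∀ i, (r - f + 1) / 2 ≤ i → i + 1 < r → lam i ≤ lam (i + 1))
    (hsum : (∑ i ∈ Finset.range r, lam i) = c)
    (hc : (r : ℝ) ≤ c) :
    (∑ i ∈ Finset.range r, lam i * ((r : ℝ) - (i : ℝ)))
      ≤ (1 / 4) * (c * ((f : ℝ) + (r : ℝ)) + (r : ℝ) * ((r : ℝ) - (f : ℝ)) + 2 * c) :=
  weighted_sum_bound_case_two_general f r c lam hone hmono hsum hc
end
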